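/- arXiv:1804.03922 — 6 statements merged into one kernel-verified Lean document; each statement's English description precedes it below -/
import Mathlib

section
/- The Cauchy index of a function f over [a,b] concatenates over subintervals: for a ≤ b ≤ c, if f has only finitely many points x in [a,c] where jumpF f (at_left x) ≠ 0 or jumpF f (at_right x) ≠ 0, then cindexE a b f + cindexE b c f = cindexE a c f. -/
open Complex Filter Topology Polynomial Set

open Classical in
noncomputable def jumpF (f : ℝ → ℝ) (F : Filter ℝ) : ℝ :=
  if Tendsto f F atTop then 1/2 else if Tendsto f F atBot then -1/2 else 0

noncomputable def cindexE (a b : ℝ) (f : ℝ → ℝ) : ℝ :=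
  (∑ᶠ x ∈ {x : ℝ | jumpF f (𝓝[>] x) ≠ 0 ∧ a ≤ x ∧ x < b}, jumpF f (𝓝[>] x)) -
  (∑ᶠ x ∈ {x : ℝ | jumpF f (𝓝[<] x) ≠ 0 ∧ a < x ∧ x ≤ b}, jumpF f (𝓝[<] x))

/-- `f` has only finitely many points in `[a,b]` with a nonzero one-sided jump. -/
def finiteJumpFs (f : ℝ → ℝ) (a b : ℝ) : Prop :=
  {x : ℝ | (jumpF f (𝓝[<] x) ≠ 0 ∨ jumpF f (𝓝[>] x) ≠ 0) ∧ a ≤ x ∧ x ≤ b}.Finite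

theorem cindexE_combine (f : ℝ → ℝ) (a b c : ℝ)
    (hab : a ≤ b) (hbc : b ≤ c) (hfin : finiteJumpFs f a c) :
    cindexE a b f + cindexE b c f = cindexE a c f := by
  have hR : {x : ℝ | jumpF f (𝓝[>] x) ≠ 0 ∧ a ≤ x ∧ x < c} =
      {x : ℝ | jumpF f (𝓝[>] x) ≠ 0 ∧ a ≤ x ∧ x < b} ∪
      {x : ℝ | jumpF f (𝓝[>] x) ≠ 0 ∧ b ≤ x ∧ x < c} := by
    ext x
    simp only [mem_setOf_eq, mem_union]
    constructor
    · rintro ⟨h1, h2, h3⟩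
      rcases lt_or_ge x b with h | h
      · exact Or.inl ⟨h1, h2, h⟩
      · exact Or.inr ⟨h1, h, h3⟩
    · rintro (⟨h1, h2, h3⟩ | ⟨h1, h2, h3⟩)
      · exact ⟨h1, h2, h3.trans_le hbc⟩
      · exact ⟨h1, hab.trans h2, h3⟩
  have hL : {x : ℝ | jumpF f (𝓝[<] x) ≠ 0 ∧ a < x ∧ x ≤ c} =
      {x : ℝ | jumpF f (𝓝[<] x) ≠ 0 ∧ a < x ∧ x ≤ b} ∪
      {x : ℝ | jumpF f (𝓝[<] x) ≠ 0 ∧ b < x ∧ x ≤ c} := by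
    ext x
    simp only [mem_setOf_eq, mem_union]
    constructor
    · rintro ⟨h1, h2, h3⟩
      rcases le_or_gt x b with h | h
      · exact Or.inl ⟨h1, h2, h⟩
      · exact Or.inr ⟨h1, h, h3⟩
    · rintro (⟨h1, h2, h3⟩ | ⟨h1, h2, h3⟩)
      · exact ⟨h1, h2, h3.trans hbc⟩
      · exact ⟨h1, hab.trans_lt h2, h3⟩
  have hfin' : ∀ a' b' : ℝ, a ≤ a' → b' ≤ c →
      {x : ℝ | jumpF f (𝓝[>] x) ≠ 0 ∧ a' ≤ x ∧ x < b'}.Finite ∧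
      {x : ℝ | jumpF f (𝓝[<] x) ≠ 0 ∧ a' < x ∧ x ≤ b'}.Finite := by
    intro a' b' ha hb
    constructor
    · exact hfin.subset fun x ⟨h1, h2, h3⟩ =>
        ⟨Or.inr h1, ha.trans h2, h3.le.trans hb⟩
    · exact hfin.subset fun x ⟨h1, h2, h3⟩ =>
        ⟨Or.inl h1, ha.trans h2.le, h3.trans hb⟩
  have hdR : Disjoint {x : ℝ | jumpF f (𝓝[>] x) ≠ 0 ∧ a ≤ x ∧ x < b}
      {x : ℝ | jumpF f (𝓝[>] x) ≠ 0 ∧ b ≤ x ∧ x < c} := by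
    rw [Set.disjoint_left]
    rintro x ⟨_, _, h3⟩ ⟨_, h2, _⟩
    exact absurd h2 (not_le.mpr h3)
  have hdL : Disjoint {x : ℝ | jumpF f (𝓝[<] x) ≠ 0 ∧ a < x ∧ x ≤ b}
      {x : ℝ | jumpF f (𝓝[<] x) ≠ 0 ∧ b < x ∧ x ≤ c} := by
    rw [Set.disjoint_left]
    rintro x ⟨_, _, h3⟩ ⟨_, h2, _⟩
    exact absurd h2 (not_lt.mpr h3)
  unfold cindexE
  rw [hR, hL,
    finsum_mem_union hdR (hfin' a b le_rfl hbc).1 (hfin' b c hab le_rfl).1,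
    finsum_mem_union hdL (hfin' a b le_rfl hbc).2 (hfin' b c hab le_rfl).2]
  ring
end

section
/- Every linear path has finitely many real-part-constancy segments: for any a, b, z ∈ ℂ, the path t ↦ (1−t)a + tb satisfies the finite_ReZ_segments property with respect to z. -/
open Complex Filter Topology Polynomial Set

/-- A predicate `P` admits a finite segmentation of `[a,b]`. -/
inductive FinitePsegments (P : ℝ → Prop) : ℝ → ℝ → Prop where
  | emptyI (a b : ℝ) (hab : b ≤ a) : FinitePsegments P a b
  | insertI_1 (a b s : ℝ) (hs : s ∈ Set.Ico a b) (h0 : s = a ∨ P s)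
      (hP : ∀ t ∈ Set.Ioo s b, P t) (hrec : FinitePsegments P a s) :
      FinitePsegments P a b
  | insertI_2 (a b s : ℝ) (hs : s ∈ Set.Ico a b) (h0 : s = a ∨ P s)
      (hP : ∀ t ∈ Set.Ioo s b, ¬ P t) (hrec : FinitePsegments P a s) :
      FinitePsegments P a b

/-- `[0,1]` decomposes into finitely many consecutive subintervals on each of whose
interiors `Re (γ t - z) = 0` holds identically or fails identically. -/
def finiteReZSegments (γ : ℝ → ℂ) (z : ℂ) : Prop :=
  FinitePsegments (fun t => (γ t - z).re = 0) 0 1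

/-! The real part of `γ t - z` is an affine function of `t`, and the zero set of an affine function
is empty, everything, or a single point; each case needs at most two segments. -/

namespace FinitePsegments

variable {P : ℝ → Prop}

theorem of_forall_Ioo (a b : ℝ) (h : ∀ t ∈ Ioo a b, P t) : FinitePsegments P a b := by
  rcases lt_or_ge a b with hab | hba
  · exact insertI_1 a b a ⟨le_rfl, hab⟩ (Or.inl rfl) h (emptyI a a le_rfl)
  · exact emptyI a b hba

theorem of_forall_not_Ioo (a b : ℝ) (h : ∀ t ∈ Ioo a b, ¬ P t) : FinitePsegments P a b := by
  rcases lt_or_ge a b with hab | hba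
  · exact insertI_2 a b a ⟨le_rfl, hab⟩ (Or.inl rfl) h (emptyI a a le_rfl)
  · exact emptyI a b hba

theorem of_forall_iff_eq (a b c : ℝ) (h : ∀ t, P t ↔ t = c) : FinitePsegments P a b := by
  by_cases hc : c ∈ Ioo a b
  · refine insertI_2 a b c (Ioo_subset_Ico_self hc) (Or.inr ((h c).2 rfl))
      (fun t ht => (h t).not.2 ht.1.ne') (of_forall_not_Ioo a c fun t ht => (h t).not.2 ht.2.ne)
  · exact of_forall_not_Ioo a b fun t ht htc => hc (((h t).1 htc) ▸ ht)

theorem affine_eq_zero (c d a b : ℝ) : FinitePsegments (fun t => c + t * d = 0) a b := by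
  by_cases hd : d = 0
  · subst hd
    by_cases hc : c = 0
    · exact of_forall_Ioo a b fun t _ => by simp [hc]
    · exact of_forall_not_Ioo a b fun t _ => by simpa using hc
  · refine of_forall_iff_eq a b (-c / d) fun t => ?_
    rw [eq_div_iff hd]
    constructor <;> intro h <;> linarith

end FinitePsegments

theorem linepath_sub_re (a b z : ℂ) (t : ℝ) :
    ((1 - (t : ℂ)) * a + t * b - z).re = a.re - z.re + t * (b.re - a.re) := by
  simp only [sub_re, add_re, mul_re, one_re, one_im, ofReal_re, ofReal_im, sub_im]
  ring

theorem finite_ReZ_segments_linepath (a b z : ℂ) :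
    finiteReZSegments (fun t : ℝ => (1 - (t : ℂ)) * a + (t : ℂ) * b) z := by
  unfold finiteReZSegments
  simp only [linepath_sub_re]
  exact FinitePsegments.affine_eq_zero _ _ 0 1
end

section
/- Every circular arc path has finitely many real-part-constancy segments: for any z₀, z ∈ ℂ and r, st, tt ∈ ℝ, the path t ↦ z₀ + r·exp(i·((1−t)·st + t·tt)) satisfies the finite_ReZ_segments property with respect to z. -/
open Complex Filter Topology Polynomial Set

/-!
The real part of `z₀ + r e^{iθ(t)} - z` is `Re (z₀ - z) + r cos θ(t)` with `θ` affine, a real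
analytic function of `t`. By the identity theorem it either vanishes on all of `[0,1]`, giving a
single segment, or has only finitely many zeros there; cutting `[0,1]` at these zeros leaves open
intervals on which it never vanishes.
-/

namespace FinitePsegments

variable {P : ℝ → Prop} {a b : ℝ}

theorem of_forall (h : ∀ t ∈ Ioo a b, P t) : FinitePsegments P a b := by
  rcases le_or_gt b a with hba | hab
  · exact emptyI a b hba
  · exact insertI_1 a b a ⟨le_rfl, hab⟩ (Or.inl rfl) h (emptyI a a le_rfl)

theorem of_forall_not (h : ∀ t ∈ Ioo a b, ¬ P t) : FinitePsegments P a b := by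
  rcases le_or_gt b a with hba | hab
  · exact emptyI a b hba
  · exact insertI_2 a b a ⟨le_rfl, hab⟩ (Or.inl rfl) h (emptyI a a le_rfl)

theorem of_subset_finset (s : Finset ℝ) :
    ∀ b, {t ∈ Ico a b | P t} ⊆ ↑s → FinitePsegments P a b := by
  classical
  induction s using Finset.induction_on_max with
  | empty =>
    intro b hs
    exact of_forall_not fun t ht hPt => Finset.notMem_empty t (hs ⟨⟨ht.1.le, ht.2⟩, hPt⟩)
  | insert m s hlt ih =>
    intro b hs
    have mem_insert {t} (ht : t ∈ Ico a b) (hPt : P t) : t = m ∨ t ∈ s := by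
      simpa using hs ⟨ht, hPt⟩
    by_cases hm : m ∈ Ico a b ∧ P m
    · obtain ⟨⟨ham, hmb⟩, hPm⟩ := hm
      refine insertI_2 a b m ⟨ham, hmb⟩ (Or.inr hPm) ?_ (ih m ?_)
      · intro t ⟨hmt, htb⟩ hPt
        rcases mem_insert ⟨ham.trans hmt.le, htb⟩ hPt with rfl | hts
        · exact lt_irrefl t hmt
        · exact (hlt t hts).not_gt hmt
      · intro t ⟨⟨hat, htm⟩, hPt⟩
        exact (mem_insert ⟨hat, htm.trans hmb⟩ hPt).resolve_left htm.ne
    · refine ih b fun t ⟨ht, hPt⟩ => (mem_insert ht hPt).resolve_left ?_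
      rintro rfl
      exact hm ⟨ht, hPt⟩

theorem of_finite (h : {t ∈ Ico a b | P t}.Finite) : FinitePsegments P a b :=
  of_subset_finset h.toFinset b h.coe_toFinset.symm.subset

theorem of_analyticOnNhd {E : Type*} [NormedAddCommGroup E] [NormedSpace ℝ E] {f : ℝ → E}
    (hf : AnalyticOnNhd ℝ f (Icc a b)) : FinitePsegments (fun t => f t = 0) a b := by
  rcases hf.eqOn_zero_or_eventually_ne_zero_of_preconnected isPreconnected_Icc with hzero | hne
  · exact of_forall fun t ht => hzero (Ioo_subset_Icc_self ht)
  · refine of_finite ((isCompact_Icc.finite_sdiff_of_mem_codiscreteWithin hne).subset ?_)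
    exact fun t ⟨ht, hft⟩ => ⟨Ico_subset_Icc_self ht, not_not_intro hft⟩

end FinitePsegments

theorem re_add_mul_exp_mul_I_sub (z₀ z : ℂ) (r θ : ℝ) :
    (z₀ + r * exp (I * θ) - z).re = (z₀ - z).re + r * Real.cos θ := by
  rw [mul_comm I, sub_re, add_re, re_ofReal_mul, exp_ofReal_mul_I_re, sub_re]
  ring

theorem finite_ReZ_segments_part_circlepath (z₀ z : ℂ) (r st tt : ℝ) :
    finiteReZSegments
      (fun t : ℝ => z₀ + (r : ℂ) * Complex.exp (Complex.I * (((1 - t) * st + t * tt : ℝ) : ℂ)))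
      z := by
  simp only [finiteReZSegments, re_add_mul_exp_mul_I_sub]
  exact FinitePsegments.of_analyticOnNhd fun t _ => by fun_prop
end

section
/- Finiteness of real-part segments implies finiteness of jumps: if γ : [0,1] → ℂ is a continuous path with finitely many real-part-constancy segments with respect to z₀, then the function f(t) = Im(γ t − z₀)/Re(γ t − z₀) has only finitely many points x ∈ [0,1] at which the left jump or right jump of f is nonzero. -/
open Complex Filter Topology Polynomial Set

lemma jumpF_eq_zero_of_tendsto {f : ℝ → ℝ} {F : Filter ℝ} [F.NeBot] {c : ℝ}
    (h : Filter.Tendsto f F (𝓝 c)) : jumpF f F = 0 := by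
  rw [jumpF, if_neg (not_tendsto_atTop_of_tendsto_nhds h),
    if_neg (not_tendsto_atBot_of_tendsto_nhds h)]

lemma jump_subset_aux {f : ℝ → ℝ} {a b s : ℝ}
    (hzero : ∀ x ∈ Set.Ioo s b, jumpF f (𝓝[<] x) = 0 ∧ jumpF f (𝓝[>] x) = 0)
    (hfin : {x : ℝ | (jumpF f (𝓝[<] x) ≠ 0 ∨ jumpF f (𝓝[>] x) ≠ 0) ∧ a ≤ x ∧ x ≤ s}.Finite) :
    finiteJumpFs f a b := by
  apply (hfin.union (Set.finite_singleton b)).subset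
  rintro x ⟨hx, hax, hxb⟩
  rcases le_or_gt x s with h | h
  · exact Or.inl ⟨hx, hax, h⟩
  · rcases eq_or_lt_of_le hxb with rfl | h'
    · exact Or.inr rfl
    · rcases hzero x ⟨h, h'⟩ with ⟨h1, h2⟩
      rcases hx with hx | hx <;> exact absurd (by assumption) hx

theorem finite_ReZ_segments_imp_jumpFs (γ : ℝ → ℂ) (z₀ : ℂ)
    (hseg : finiteReZSegments γ z₀) (hpath : ContinuousOn γ (Set.Icc 0 1)) :
    finiteJumpFs (fun t => (γ t - z₀).im / (γ t - z₀).re) 0 1 := by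
  suffices H : ∀ a b : ℝ,
      FinitePsegments (fun t => (γ t - z₀).re = 0) a b → 0 ≤ a → b ≤ 1 →
      finiteJumpFs (fun t => (γ t - z₀).im / (γ t - z₀).re) a b from
    H 0 1 hseg le_rfl le_rfl
  intro a b hseg
  induction hseg with
  | emptyI b hab =>
    intro _ _
    exact (Set.finite_singleton a).subset fun x ⟨_, h1, h2⟩ =>
      le_antisymm (h2.trans hab) h1
  | insertI_1 b s hs h0 hP hrec ih =>
    intro ha hb
    refine jump_subset_aux ?_ (ih ha (hs.2.le.trans hb))
    intro x hx
    have hev : ∀ᶠ t in 𝓝 x, (fun t => (γ t - z₀).im / (γ t - z₀).re) t = 0 := by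
      filter_upwards [Ioo_mem_nhds hx.1 hx.2] with t ht
      simp [hP t ht]
    have h1 : Filter.Tendsto (fun t => (γ t - z₀).im / (γ t - z₀).re) (𝓝 x) (𝓝 0) := by
      rw [Filter.tendsto_congr' hev]; exact tendsto_const_nhds
    exact ⟨jumpF_eq_zero_of_tendsto (h1.mono_left nhdsWithin_le_nhds),
      jumpF_eq_zero_of_tendsto (h1.mono_left nhdsWithin_le_nhds)⟩
  | insertI_2 b s hs h0 hP hrec ih =>
    intro ha hb
    refine jump_subset_aux ?_ (ih ha (hs.2.le.trans hb))
    intro x hx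
    have hγ : ContinuousAt γ x :=
      hpath.continuousAt (Icc_mem_nhds (lt_of_le_of_lt (ha.trans hs.1) hx.1)
        (lt_of_lt_of_le hx.2 hb))
    have hc : ContinuousAt (fun t => (γ t - z₀).im / (γ t - z₀).re) x := by
      apply ContinuousAt.div
      · exact Complex.continuous_im.continuousAt.comp (hγ.sub continuousAt_const)
      · exact Complex.continuous_re.continuousAt.comp (hγ.sub continuousAt_const)
      · exact hP x hx
    exact ⟨jumpF_eq_zero_of_tendsto (hc.tendsto.mono_left nhdsWithin_le_nhds),
      jumpF_eq_zero_of_tendsto (hc.tendsto.mono_left nhdsWithin_le_nhds)⟩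
end

section
/- Cauchy index of a rational function via signed remainder sequences with alternative sign variations: for real polynomials p, q with p and q coprime and a < b, 2 · cindex_polyE a b q p = Var_alt(SRemS(p,q); a) − Var_alt(SRemS(p,q); b), where SRemS is the signed remainder (Sturm) sequence of p and q, and Var_alt evaluates the sequence of polynomials at a point and computes ∑|sign(x₁) − sign(x₂)| over consecutive pairs. -/
open Complex Filter Topology Polynomial Set

/-- The Cauchy index of the rational function `q/p` over `[a,b]`. -/
noncomputable def cindexPolyE (a b : ℝ) (q p : Polynomial ℝ) : ℝ :=
  cindexE a b fun x => q.eval x / p.eval x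

/-- The signed remainder (Sturm-type) sequence of `p` and `q`, computed with fuel. -/
noncomputable def smodsAux : ℕ → Polynomial ℝ → Polynomial ℝ → List (Polynomial ℝ)
  | 0, _, _ => []
  | n + 1, p, q => if p = 0 then [] else p :: smodsAux n q (-(p % q))

/-- The signed remainder sequence `SRemS(p,q) = [p, q, -(p mod q), ...]`. -/
noncomputable def smods (p q : Polynomial ℝ) : List (Polynomial ℝ) :=
  smodsAux (p.natDegree + q.natDegree + 2) p q

/-- Alternative sign-variation count of a list of reals:
`∑ |sign x₁ - sign x₂|` over consecutive pairs. -/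
noncomputable def changesAlt : List ℝ → ℤ
  | [] => 0
  | [_] => 0
  | x :: y :: xs => |((SignType.sign x : ℤ)) - ((SignType.sign y : ℤ))| + changesAlt (y :: xs)

/-- Evaluate a list of polynomials at a point and compute alternative sign variations. -/
noncomputable def changesAltPolyAt (ps : List (Polynomial ℝ)) (a : ℝ) : ℤ :=
  changesAlt (ps.map fun p => p.eval a)


/-!
For coprime `p` and `q` the Cauchy index satisfies the inversion formula
`Ind(q/p) + Ind(p/q) = (sgn (pq)(b) - sgn (pq)(a)) / 2`. On an interval whose interior avoids the
roots of `pq` only the endpoints contribute, and there the jump of the quotient whose denominator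
vanishes is half the sign of `pq` just inside the interval; in general one splits the interval at
the roots of `pq`. Together with `Ind(p/q) = -Ind(-(p mod q)/q)` and
`|sgn u - sgn v| = 1 - sgn (uv)` (for `u`, `v` not both zero), the formula lets the alternative
sign variations along `SRemS(p, q)` telescope by induction on the Euclidean algorithm.
-/

section JumpF

variable {f g : ℝ → ℝ} {F : Filter ℝ}

lemma jumpF_congr (h : f =ᶠ[F] g) : jumpF f F = jumpF g F := by
  rw [jumpF, jumpF, tendsto_congr' h, tendsto_congr' h]

lemma jumpF_of_tendsto_nhds [F.NeBot] {c : ℝ} (h : Tendsto f F (𝓝 c)) : jumpF f F = 0 := by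
  simp [jumpF, not_tendsto_atTop_of_tendsto_nhds h, not_tendsto_atBot_of_tendsto_nhds h]

lemma jumpF_of_tendsto_atBot [F.NeBot] (h : Tendsto f F atBot) : jumpF f F = -1 / 2 := by
  simp [jumpF, h, h.not_tendsto disjoint_atBot_atTop]

lemma jumpF_add_of_tendsto_nhds {c : ℝ} (hg : Tendsto g F (𝓝 c)) :
    jumpF (fun y => f y + g y) F = jumpF f F := by
  have hTop : Tendsto (fun y => f y + g y) F atTop ↔ Tendsto f F atTop :=
    ⟨fun h => by simpa using h.atTop_add hg.neg, fun h => h.atTop_add hg⟩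
  have hBot : Tendsto (fun y => f y + g y) F atBot ↔ Tendsto f F atBot :=
    ⟨fun h => by simpa using h.atBot_add hg.neg, fun h => h.atBot_add hg⟩
  rw [jumpF, jumpF, hTop, hBot]

lemma jumpF_neg [F.NeBot] : jumpF (fun y => -f y) F = -jumpF f F := by
  by_cases hTop : Tendsto f F atTop
  · rw [jumpF_of_tendsto_atBot (tendsto_neg_atBot_iff.2 hTop), jumpF, if_pos hTop]
    norm_num
  by_cases hBot : Tendsto f F atBot
  · simp [jumpF, hTop, hBot, tendsto_neg_atTop_iff.2 hBot]
    norm_num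
  simp [jumpF, hTop, hBot]

lemma jumpF_of_tendsto_abs_atTop [F.NeBot] {s : SignType}
    (h : Tendsto (fun y => |f y|) F atTop) (hs : ∀ᶠ y in F, SignType.sign (f y) = s) :
    jumpF f F = s / 2 := by
  cases s with
  | zero =>
    obtain ⟨y, hy, hy'⟩ := (hs.and (h.eventually_gt_atTop 0)).exists
    simp_all
  | pos =>
    have hf : (fun y => |f y|) =ᶠ[F] f := by
      filter_upwards [hs] with y hy using abs_of_pos (sign_eq_one_iff.1 hy)
    simp [jumpF, h.congr' hf]
  | neg =>
    have hf : (fun y => -|f y|) =ᶠ[F] f := by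
      filter_upwards [hs] with y hy using by rw [abs_of_neg (sign_eq_neg_one_iff.1 hy), neg_neg]
    rw [jumpF_of_tendsto_atBot ((tendsto_neg_atBot_iff.2 h).congr' hf)]
    simp

end JumpF

section CauchyIndex

variable {f : ℝ → ℝ} {a b c : ℝ}

lemma cindexE_eq_finsum_sub_finsum (a b : ℝ) (f : ℝ → ℝ) :
    cindexE a b f =
      (∑ᶠ x ∈ Ico a b, jumpF f (𝓝[>] x)) - ∑ᶠ x ∈ Ioc a b, jumpF f (𝓝[<] x) := by
  rw [cindexE, ← finsum_mem_inter_support _ (Ico a b), ← finsum_mem_inter_support _ (Ioc a b)]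
  congr 2 <;> ext x <;> simp [and_comm]

lemma cindexE_congr {g : ℝ → ℝ} (hR : ∀ x, jumpF f (𝓝[>] x) = jumpF g (𝓝[>] x))
    (hL : ∀ x, jumpF f (𝓝[<] x) = jumpF g (𝓝[<] x)) : cindexE a b f = cindexE a b g := by
  simp only [cindexE, hR, hL]

lemma cindexE_neg : cindexE a b (fun y => -f y) = -cindexE a b f := by
  simp only [cindexE_eq_finsum_sub_finsum, jumpF_neg, finsum_neg_distrib]
  ring

lemma cindexE_const_zero : cindexE a b (fun _ => 0) = 0 := by
  simp [cindexE_eq_finsum_sub_finsum, jumpF_of_tendsto_nhds tendsto_const_nhds]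

lemma cindexE_add_adjacent_intervals (hR : (Function.support fun x => jumpF f (𝓝[>] x)).Finite)
    (hL : (Function.support fun x => jumpF f (𝓝[<] x)).Finite) (hab : a ≤ b) (hbc : b ≤ c) :
    cindexE a b f + cindexE b c f = cindexE a c f := by
  simp only [cindexE_eq_finsum_sub_finsum, ← Ico_union_Ico_eq_Ico hab hbc,
    ← Ioc_union_Ioc_eq_Ioc hab hbc,
    finsum_mem_union' Ico_disjoint_Ico_same (hR.subset inter_subset_right)
      (hR.subset inter_subset_right),
    finsum_mem_union' (Ioc_disjoint_Ioc_of_le le_rfl) (hL.subset inter_subset_right)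
      (hL.subset inter_subset_right)]
  ring

lemma cindexE_eq_jumpF_sub_jumpF (hab : a < b) (hR : ∀ x ∈ Ioo a b, jumpF f (𝓝[>] x) = 0)
    (hL : ∀ x ∈ Ioo a b, jumpF f (𝓝[<] x) = 0) :
    cindexE a b f = jumpF f (𝓝[>] a) - jumpF f (𝓝[<] b) := by
  have hR' : Ioo a b ∩ Function.support (fun x => jumpF f (𝓝[>] x)) = ∅ := by
    ext x; simp +contextual [hR x]
  have hL' : Ioo a b ∩ Function.support (fun x => jumpF f (𝓝[<] x)) = ∅ := by
    ext x; simp +contextual [hL x]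
  rw [cindexE_eq_finsum_sub_finsum, ← Ioo_insert_left hab, ← Ioo_insert_right hab,
    finsum_mem_insert' _ (fun h => h.1.false) (hR' ▸ finite_empty),
    finsum_mem_insert' _ (fun h => h.2.false) (hL' ▸ finite_empty),
    finsum_mem_of_eqOn_zero hR, finsum_mem_of_eqOn_zero hL, add_zero, add_zero]

end CauchyIndex

lemma eq_zero_of_forall_disjoint_Ioo {α M : Type*} [LinearOrder α] [AddZeroClass M]
    {Φ : α → α → M} (Z : Finset α)
    (split : ∀ a b c, a < b → b < c → Φ a c = Φ a b + Φ b c)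
    (base : ∀ a b, a < b → Disjoint (Ioo a b) Z → Φ a b = 0) {a b : α} (hab : a < b) :
    Φ a b = 0 := by
  induction Z using Finset.induction_on generalizing a b with
  | empty => exact base a b hab (by simp)
  | insert z Z _ ih =>
    refine ih (fun a b hab hZ => ?_) hab
    by_cases hz : z ∈ Ioo a b
    · have hsub : Ioo a z ⊆ Ioo a b ∧ Ioo z b ⊆ Ioo a b :=
        ⟨Ioo_subset_Ioo_right hz.2.le, Ioo_subset_Ioo_left hz.1.le⟩
      rw [split a z b hz.1 hz.2, base a z hz.1, base z b hz.2, add_zero]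
      · simpa using (hZ.mono_left hsub.2)
      · simpa using (hZ.mono_left hsub.1)
    · exact base a b hab (by rw [Finset.coe_insert, disjoint_insert_right]; exact ⟨hz, hZ⟩)

lemma IsPreconnected.sign_eq {X : Type*} [TopologicalSpace X] {S : Set X} {f : X → ℝ}
    {x y : X} (hS : IsPreconnected S) (hf : ContinuousOn f S) (h0 : ∀ z ∈ S, f z ≠ 0)
    (hx : x ∈ S) (hy : y ∈ S) :
    SignType.sign (f x) = SignType.sign (f y) := by
  have hIVT : ∀ u ∈ S, ∀ v ∈ S, f u < 0 → 0 < f v → False := fun u hu v hv hu' hv' => by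
    obtain ⟨z, hz, hz0⟩ := hS.intermediate_value hu hv hf ⟨hu'.le, hv'.le⟩
    exact h0 z hz hz0
  rcases (h0 x hx).lt_or_gt with hx' | hx' <;> rcases (h0 y hy).lt_or_gt with hy' | hy'
  · rw [sign_neg hx', sign_neg hy']
  · exact (hIVT x hx y hy hx' hy').elim
  · exact (hIVT y hy x hx hy' hx').elim
  · rw [sign_pos hx', sign_pos hy']

lemma sign_div_eq_sign_mul {α : Type*} [Field α] [LinearOrder α] [IsStrictOrderedRing α]
    (a b : α) :
    SignType.sign (a / b) = SignType.sign (a * b) := by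
  rw [div_eq_mul_inv, sign_mul, sign_mul, ← signHom_apply, map_inv₀, signHom_apply]
  cases SignType.sign b <;> rfl

lemma IsCoprime.neg_mod {R : Type*} [EuclideanDomain R] {p q : R} (h : IsCoprime p q) :
    IsCoprime q (-(p % q)) := by
  rw [EuclideanDomain.mod_eq_sub_mul_div, sub_eq_add_neg, ← mul_neg]
  exact (h.symm.add_mul_left_right _).neg_right

lemma IsCoprime.eval_ne_zero_or_eval_ne_zero {R : Type*} [CommRing R] [Nontrivial R]
    {p q : R[X]} (h : IsCoprime p q) (x : R) : p.eval x ≠ 0 ∨ q.eval x ≠ 0 := by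
  simpa using aeval_ne_zero_of_isCoprime h x

namespace Polynomial

variable {p q : ℝ[X]} {x : ℝ} {F : Filter ℝ}

lemma eventually_eval_ne_zero_nhdsNE (hp : p ≠ 0) (x : ℝ) :
    ∀ᶠ y in 𝓝[≠] x, p.eval y ≠ 0 := by
  have hroots : ({y | p.IsRoot y} \ {x})ᶜ ∈ 𝓝 x :=
    (p.finite_setOfPred_isRoot hp).sdiff.isClosed.compl_mem_nhds (by simp)
  filter_upwards [nhdsWithin_le_nhds hroots, self_mem_nhdsWithin] with y hy hyx
    using fun h => hy ⟨h, hyx⟩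

lemma jumpF_div_eq_zero [F.NeBot] (hF : F ≤ 𝓝 x) (hpx : p.eval x ≠ 0) (q : ℝ[X]) :
    jumpF (fun y => q.eval y / p.eval y) F = 0 :=
  jumpF_of_tendsto_nhds (((q.continuous.tendsto x).div (p.continuous.tendsto x) hpx).mono_left hF)

lemma finite_support_jumpF_div (hp : p ≠ 0) (q : ℝ[X]) (G : ℝ → Filter ℝ)
    [∀ x, (G x).NeBot] (hG : ∀ x, G x ≤ 𝓝 x) :
    (Function.support fun x => jumpF (fun y => q.eval y / p.eval y) (G x)).Finite :=
  (p.finite_setOfPred_isRoot hp).subset fun x hx =>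
    by_contra fun hpx => hx (jumpF_div_eq_zero (hG x) hpx q)

lemma tendsto_abs_div_nhdsNE_atTop (hp : p ≠ 0) (hpx : p.eval x = 0) (hqx : q.eval x ≠ 0) :
    Tendsto (fun y => |q.eval y / p.eval y|) (𝓝[≠] x) atTop := by
  have hq : Tendsto (fun y => |q.eval y|) (𝓝[≠] x) (𝓝 |q.eval x|) :=
    (q.continuous.abs.tendsto x).mono_left nhdsWithin_le_nhds
  have hp0 : Tendsto (fun y => |p.eval y|) (𝓝[≠] x) (𝓝[>] 0) := by
    refine tendsto_nhdsWithin_iff.2 ⟨?_, ?_⟩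
    · simpa [hpx] using (p.continuous.abs.tendsto x).mono_left nhdsWithin_le_nhds
    · filter_upwards [eventually_eval_ne_zero_nhdsNE hp x] with y hy using abs_pos.2 hy
  simpa [abs_div, div_eq_mul_inv] using
    hq.pos_mul_atTop (abs_pos.2 hqx) (tendsto_inv_nhdsGT_zero.comp hp0)

lemma jumpF_div_add_jumpF_div [F.NeBot] (hF : F ≤ 𝓝[≠] x) (hp : p ≠ 0) (hq : q ≠ 0)
    (hpq : p.eval x ≠ 0 ∨ q.eval x ≠ 0) {s : SignType}
    (hs : ∀ᶠ y in F, SignType.sign ((p * q).eval y) = s) :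
    jumpF (fun y => q.eval y / p.eval y) F + jumpF (fun y => p.eval y / q.eval y) F
      = (s - SignType.sign ((p * q).eval x) : ℝ) / 2 := by
  wlog hqx : q.eval x ≠ 0 generalizing p q
  · rw [add_comm, mul_comm]
    exact this hq hp hpq.symm (by simpa only [mul_comm] using hs) (hpq.resolve_right hqx)
  have hFx : F ≤ 𝓝 x := hF.trans nhdsWithin_le_nhds
  rw [jumpF_div_eq_zero hFx hqx p, add_zero]
  by_cases hpx : p.eval x = 0
  · rw [jumpF_of_tendsto_abs_atTop (s := s)
      ((tendsto_abs_div_nhdsNE_atTop hp hpx hqx).mono_left hF)]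
    · simp [hpx]
    · filter_upwards [hs] with y hy
      rw [← hy, sign_div_eq_sign_mul, mul_comm, eval_mul]
  · have hpqx : (p * q).eval x ≠ 0 := by simp [hpx, hqx]
    have hsign : Tendsto (fun y => SignType.sign ((p * q).eval y)) (𝓝 x)
        (pure (SignType.sign ((p * q).eval x))) := by
      rw [← nhds_discrete]
      exact (continuousAt_sign_of_ne_zero hpqx).tendsto.comp ((p * q).continuous.tendsto x)
    obtain ⟨y, hy, hyx⟩ := (hs.and (tendsto_pure.1 hsign |>.filter_mono hFx)).exists
    rw [jumpF_div_eq_zero hFx hpx q, ← hy, hyx]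
    simp

lemma jumpF_div_mod (hq : q ≠ 0) (hF : F ≤ 𝓝[≠] x) :
    jumpF (fun y => p.eval y / q.eval y) F = jumpF (fun y => (p % q).eval y / q.eval y) F := by
  have hdiv : (fun y => p.eval y / q.eval y)
      =ᶠ[F] fun y => (p % q).eval y / q.eval y + (p / q).eval y := by
    filter_upwards [hF (eventually_eval_ne_zero_nhdsNE hq x)] with y hy
    conv_lhs => rw [← EuclideanDomain.mod_add_div p q]
    rw [eval_add, eval_mul]
    field_simp
  rw [jumpF_congr hdiv, jumpF_add_of_tendsto_nhds
    (((p / q).continuous.tendsto x).mono_left (hF.trans nhdsWithin_le_nhds))]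

end Polynomial

section CauchyIndexPoly

variable {p q : ℝ[X]} {a b c : ℝ}

lemma cindexPolyE_zero_left (a b : ℝ) (p : ℝ[X]) : cindexPolyE a b 0 p = 0 := by
  simp [cindexPolyE, cindexE_const_zero]

lemma cindexPolyE_zero_right (a b : ℝ) (q : ℝ[X]) : cindexPolyE a b q 0 = 0 := by
  simp [cindexPolyE, cindexE_const_zero]

lemma cindexPolyE_neg (a b : ℝ) (q p : ℝ[X]) :
    cindexPolyE a b (-q) p = -cindexPolyE a b q p := by
  simp only [cindexPolyE, eval_neg, neg_div]
  exact cindexE_neg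

lemma cindexPolyE_mod (hq : q ≠ 0) (a b : ℝ) :
    cindexPolyE a b p q = cindexPolyE a b (p % q) q :=
  cindexE_congr (fun x => jumpF_div_mod hq (nhdsGT_le_nhdsNE x))
    (fun x => jumpF_div_mod hq (nhdsLT_le_nhdsNE x))

lemma cindexPolyE_add_adjacent_intervals (hp : p ≠ 0) (hab : a ≤ b) (hbc : b ≤ c) :
    cindexPolyE a b q p + cindexPolyE b c q p = cindexPolyE a c q p :=
  cindexE_add_adjacent_intervals (finite_support_jumpF_div hp q _ fun _ => nhdsWithin_le_nhds)
    (finite_support_jumpF_div hp q _ fun _ => nhdsWithin_le_nhds) hab hbc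

lemma cindexPolyE_add_cindexPolyE_swap_of_forall_Ioo (hab : a < b) (hp : p ≠ 0) (hq : q ≠ 0)
    (hcop : IsCoprime p q) (hroots : ∀ x ∈ Ioo a b, (p * q).eval x ≠ 0) :
    cindexPolyE a b q p + cindexPolyE a b p q
      = (SignType.sign ((p * q).eval b) - SignType.sign ((p * q).eval a) : ℝ) / 2 := by
  have hsign : ∀ y ∈ Ioo a b,
      SignType.sign ((p * q).eval y) = SignType.sign ((p * q).eval ((a + b) / 2)) :=
    fun y hy => isPreconnected_Ioo.sign_eq (p * q).continuous.continuousOn hroots hy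
      ⟨by linarith, by linarith⟩
  have hpx : ∀ x ∈ Ioo a b, p.eval x ≠ 0 := fun x hx h => hroots x hx (by simp [h])
  have hqx : ∀ x ∈ Ioo a b, q.eval x ≠ 0 := fun x hx h => hroots x hx (by simp [h])
  have ha := jumpF_div_add_jumpF_div (nhdsGT_le_nhdsNE a) hp hq
    (hcop.eval_ne_zero_or_eval_ne_zero a) (eventually_of_mem (Ioo_mem_nhdsGT hab) hsign)
  have hb := jumpF_div_add_jumpF_div (nhdsLT_le_nhdsNE b) hp hq
    (hcop.eval_ne_zero_or_eval_ne_zero b) (eventually_of_mem (Ioo_mem_nhdsLT hab) hsign)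
  have hends (r s : ℝ[X]) (hr : ∀ x ∈ Ioo a b, r.eval x ≠ 0) :
      cindexE a b (fun y => s.eval y / r.eval y) = jumpF (fun y => s.eval y / r.eval y) (𝓝[>] a)
        - jumpF (fun y => s.eval y / r.eval y) (𝓝[<] b) :=
    cindexE_eq_jumpF_sub_jumpF hab (fun x hx => jumpF_div_eq_zero nhdsWithin_le_nhds (hr x hx) s)
      (fun x hx => jumpF_div_eq_zero nhdsWithin_le_nhds (hr x hx) s)
  rw [cindexPolyE, cindexPolyE, hends p q hpx, hends q p hqx]
  linarith

theorem cindexPolyE_add_cindexPolyE_swap (hab : a < b) (hcop : IsCoprime p q) :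
    cindexPolyE a b q p + cindexPolyE a b p q
      = (SignType.sign ((p * q).eval b) - SignType.sign ((p * q).eval a) : ℝ) / 2 := by
  rcases eq_or_ne p 0 with rfl | hp
  · simp [cindexPolyE_zero_left, cindexPolyE_zero_right]
  rcases eq_or_ne q 0 with rfl | hq
  · simp [cindexPolyE_zero_left, cindexPolyE_zero_right]
  refine sub_eq_zero.1 (eq_zero_of_forall_disjoint_Ioo (p * q).roots.toFinset
    (Φ := fun a b => cindexPolyE a b q p + cindexPolyE a b p q
      - (SignType.sign ((p * q).eval b) - SignType.sign ((p * q).eval a) : ℝ) / 2) ?_ ?_ hab)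
  · intro a b c hab hbc
    rw [← cindexPolyE_add_adjacent_intervals hp hab.le hbc.le,
      ← cindexPolyE_add_adjacent_intervals hq hab.le hbc.le]
    ring
  · intro a b hab hdisj
    refine sub_eq_zero.2 (cindexPolyE_add_cindexPolyE_swap_of_forall_Ioo hab hp hq hcop
      fun x hx hroot => Set.disjoint_left.1 hdisj hx ?_)
    simpa [mul_ne_zero hp hq] using hroot

end CauchyIndexPoly

section SignedRemainders

variable {p q : ℝ[X]}

lemma smodsAux_zero_left (n : ℕ) (q : ℝ[X]) : smodsAux n 0 q = [] := by
  cases n <;> simp [smodsAux]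

lemma smodsAux_zero_right (hp : p ≠ 0) {n : ℕ} (hn : n ≠ 0) : smodsAux n p 0 = [p] := by
  obtain ⟨m, rfl⟩ := Nat.exists_eq_succ_of_ne_zero hn
  simp [smodsAux, hp, smodsAux_zero_left]

lemma natDegree_neg_mod_lt (hq : q ≠ 0) (hr : p % q ≠ 0) : (-(p % q)).natDegree < q.natDegree :=
  natDegree_neg (p % q) ▸ natDegree_lt_natDegree hr (degree_mod_lt p hq)

lemma smodsAux_eq_smodsAux_of_le (p q : ℝ[X]) {n m : ℕ} (hn : q.natDegree + 2 ≤ n)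
    (hm : q.natDegree + 2 ≤ m) : smodsAux n p q = smodsAux m p q := by
  induction q using degree_lt_wf.induction generalizing p n m with
  | _ q ih =>
  obtain ⟨n, rfl⟩ : ∃ k, n = k + 1 := ⟨n - 1, by omega⟩
  obtain ⟨m, rfl⟩ : ∃ k, m = k + 1 := ⟨m - 1, by omega⟩
  simp only [smodsAux]
  congr 2
  rcases eq_or_ne q 0 with rfl | hq
  · rw [smodsAux_zero_left, smodsAux_zero_left]
  by_cases hr : p % q = 0
  · rw [hr, neg_zero, smodsAux_zero_right hq (by omega), smodsAux_zero_right hq (by omega)]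
  have hdeg := natDegree_neg_mod_lt hq hr
  exact ih _ (by simpa using degree_mod_lt p hq) q (by omega) (by omega)

lemma smods_zero_left (q : ℝ[X]) : smods 0 q = [] :=
  smodsAux_zero_left _ q

lemma smods_zero_right (hp : p ≠ 0) : smods p 0 = [p] :=
  smodsAux_zero_right hp (by omega)

lemma smods_eq_cons (hp : p ≠ 0) (hq : q ≠ 0) : smods p q = p :: smods q (-(p % q)) := by
  rw [smods, smodsAux, if_neg hp, smods]
  congr 1
  by_cases hr : p % q = 0
  · rw [hr, neg_zero, smodsAux_zero_right hq (by omega), smodsAux_zero_right hq (by omega)]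
  have hdeg := natDegree_neg_mod_lt hq hr
  exact smodsAux_eq_smodsAux_of_le q _ (by omega) (by omega)

lemma abs_sign_sub_sign {u v : ℝ} (h : u ≠ 0 ∨ v ≠ 0) :
    |(SignType.sign u : ℤ) - SignType.sign v| = 1 - SignType.sign (u * v) := by
  rw [sign_mul]
  rcases lt_trichotomy u 0 with hu | rfl | hu <;> rcases lt_trichotomy v 0 with hv | rfl | hv <;>
    simp_all [sign_neg, sign_pos]

lemma changesAltPolyAt_smods (hp : p ≠ 0) (hq : q ≠ 0) (hcop : IsCoprime p q) (x : ℝ) :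
    changesAltPolyAt (smods p q) x
      = 1 - SignType.sign ((p * q).eval x) + changesAltPolyAt (smods q (-(p % q))) x := by
  obtain ⟨t, ht⟩ : ∃ t, smods q (-(p % q)) = q :: t := by
    rw [smods, smodsAux, if_neg hq]
    exact ⟨_, rfl⟩
  rw [smods_eq_cons hp hq, ht]
  simp only [changesAltPolyAt, List.map_cons, changesAlt]
  rw [abs_sign_sub_sign (hcop.eval_ne_zero_or_eval_ne_zero x), eval_mul]

end SignedRemainders

theorem cindex_polyE_changes_alt_itv_mods (a b : ℝ) (p q : Polynomial ℝ)
    (hab : a < b) (hcop : IsCoprime p q) :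
    2 * cindexPolyE a b q p
      = ((changesAltPolyAt (smods p q) a - changesAltPolyAt (smods p q) b : ℤ) : ℝ) := by
  induction q using Polynomial.degree_lt_wf.induction generalizing p with
  | _ q ih =>
  rcases eq_or_ne p 0 with rfl | hp
  · simp [cindexPolyE_zero_right, smods_zero_left, changesAltPolyAt, changesAlt]
  rcases eq_or_ne q 0 with rfl | hq
  · simp [cindexPolyE_zero_left, smods_zero_right hp, changesAltPolyAt, changesAlt]
  have hrem := ih _ (by simpa using degree_mod_lt p hq) q hcop.neg_mod
  have hswap := cindexPolyE_add_cindexPolyE_swap hab hcop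
  rw [cindexPolyE_neg, ← cindexPolyE_mod hq] at hrem
  rw [changesAltPolyAt_smods hp hq hcop, changesAltPolyAt_smods hp hq hcop]
  push_cast at hrem ⊢
  linarith
end

section
/- No-root-on-segment criterion: a complex polynomial p has no root on the closed segment from a to b (with p(a) ≠ 0 and p(b) ≠ 0) if and only if g = gcd(Re-part, Im-part) has no real root in [0,1], where the Re-part and Im-part are the real polynomials of real and imaginary coefficient parts of the composed polynomial p ∘ (a + (b−a)·X). -/
open Complex Filter Topology Polynomial Set

/-- The real polynomial of the real parts of the coefficients of `p`. -/
noncomputable def rePoly (p : Polynomial ℂ) : Polynomial ℝ :=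
  ∑ i ∈ p.support, Polynomial.C ((p.coeff i).re) * Polynomial.X ^ i

/-- The real polynomial of the imaginary parts of the coefficients of `p`. -/
noncomputable def imPoly (p : Polynomial ℂ) : Polynomial ℝ :=
  ∑ i ∈ p.support, Polynomial.C ((p.coeff i).im) * Polynomial.X ^ i

lemma eval_re_im (q : Polynomial ℂ) (t : ℝ) :
    q.eval (t : ℂ) = Complex.ofReal ((rePoly q).eval t) + Complex.I * Complex.ofReal ((imPoly q).eval t) := by
  rw [rePoly, imPoly, Polynomial.eval_finset_sum, Polynomial.eval_finset_sum]
  push_cast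
  rw [Finset.mul_sum, ← Finset.sum_add_distrib]
  rw [Polynomial.eval_eq_sum, Polynomial.sum_def]
  refine Finset.sum_congr rfl fun i _ => ?_
  simp only [Polynomial.eval_mul, Polynomial.eval_C, Polynomial.eval_pow, Polynomial.eval_X]
  rw [← Complex.re_add_im (q.coeff i)]
  simp only [Complex.add_re, Complex.add_im, Complex.ofReal_re, Complex.ofReal_im,
    Complex.mul_re, Complex.mul_im, Complex.I_re, Complex.I_im]
  push_cast
  ring

lemma gcd_isRoot_iff (f g : Polynomial ℝ) (t : ℝ) :
    (gcd f g).IsRoot t ↔ f.IsRoot t ∧ g.IsRoot t := by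
  constructor
  · intro h
    exact ⟨h.dvd (gcd_dvd_left f g), h.dvd (gcd_dvd_right f g)⟩
  · rintro ⟨hf, hg⟩
    rw [← Polynomial.dvd_iff_isRoot] at hf hg ⊢
    exact dvd_gcd hf hg

theorem no_proots_line_iff (p : Polynomial ℂ) (a b : ℂ)
    (ha : p.eval a ≠ 0) (hb : p.eval b ≠ 0) :
    (∀ z ∈ segment ℝ a b, p.eval z ≠ 0) ↔
      (∀ t ∈ Set.Icc (0:ℝ) 1,
        (gcd (rePoly (p.comp (Polynomial.C a + Polynomial.C (b - a) * Polynomial.X)))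
             (imPoly (p.comp (Polynomial.C a + Polynomial.C (b - a) * Polynomial.X)))).eval t
          ≠ 0) := by
  set q := p.comp (Polynomial.C a + Polynomial.C (b - a) * Polynomial.X) with hq
  have key : ∀ t : ℝ, p.eval (a + (b - a) * t) = 0 ↔ (gcd (rePoly q) (imPoly q)).eval t = 0 := by
    intro t
    have h1 : q.eval (t : ℂ) = p.eval (a + (b - a) * t) := by
      simp [hq, Polynomial.eval_comp]
    have h2 := eval_re_im q t
    rw [← h1, h2]
    rw [show ((gcd (rePoly q) (imPoly q)).eval t = 0) ↔ (gcd (rePoly q) (imPoly q)).IsRoot t from Iff.rfl,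
      gcd_isRoot_iff]
    constructor
    · intro h
      have hre : (rePoly q).eval t = 0 := by
        have := congrArg Complex.re h
        simpa using this
      have him : (imPoly q).eval t = 0 := by
        have := congrArg Complex.im h
        simpa using this
      exact ⟨hre, him⟩
    · rintro ⟨h1, h2⟩
      rw [Polynomial.IsRoot] at h1 h2
      rw [h1, h2]
      simp
  constructor
  · intro h t ht hz
    have hmem : a + (b - a) * (t : ℂ) ∈ segment ℝ a b := by
      rw [segment_eq_image']
      exact ⟨t, ht, by simp [smul_eq_mul]; ring⟩
    exact h _ hmem ((key t).mpr hz)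
  · intro h z hz hpz
    rw [segment_eq_image'] at hz
    obtain ⟨t, ht, rfl⟩ := hz
    apply h t ht
    rw [← key t]
    convert hpz using 3
    simp [smul_eq_mul]
    ring
end
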